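/- arXiv:2502.02113 — 4 statements merged into one kernel-verified Lean document; each statement's English description precedes it below -/
import Mathlib

section
/- For every real α ≥ 1, the series Σ_{n=0}^∞ |κ₂ⁿ(α)| converges, i.e. the power series of (b₀ + b₁z + b₂z²)^α at 0 is absolutely convergent at the endpoints z = ±1. -/
open Finset

/-- `b₀ = (3α−2)/(2α)`. -/
noncomputable def b0 (α : ℝ) : ℝ := (3 * α - 2) / (2 * α)

/-- `b₂ = (α−2)/(2α)`. -/
noncomputable def b2 (α : ℝ) : ℝ := (α - 2) / (2 * α)

/-- Generalized binomial coefficient `C(β,k) = β(β−1)⋯(β−k+1)/k!`. -/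
noncomputable def genBinom (β : ℝ) (k : ℕ) : ℝ :=
  (∏ i ∈ Finset.range k, (β - i)) / (Nat.factorial k)

lemma genBinom_succ (β : ℝ) (n : ℕ) :
    genBinom β (n + 1) = genBinom β n * (β - n) / (n + 1) := by
  have h1 : (((n + 1).factorial : ℕ) : ℝ) = ((n : ℝ) + 1) * (n.factorial : ℝ) := by
    rw [Nat.factorial_succ]; push_cast; ring
  rw [genBinom, genBinom, Finset.prod_range_succ, h1, div_mul_eq_mul_div, div_div]
  rw [mul_comm ((n : ℝ) + 1) (n.factorial : ℝ)]

lemma summable_abs_genBinom (α : ℝ) (hα : 1 ≤ α) :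
    Summable (fun n : ℕ => |genBinom α n|) := by
  set a : ℕ → ℝ := fun n => |genBinom α n| with ha
  set N := ⌈α⌉₊ with hNdef
  have hNα : α ≤ (N : ℝ) := Nat.le_ceil α
  have hN1 : 1 ≤ N := Nat.one_le_ceil_iff.mpr (by linarith)
  set M := a N * (N : ℝ) ^ (1 + α) with hM
  have key : ∀ n, N ≤ n → a n * (n : ℝ) ^ (1 + α) ≤ M := by
    intro n hn
    induction n, hn using Nat.le_induction with
    | base => exact le_rfl
    | succ n hn ih =>
      have hn1 : (1 : ℝ) ≤ (n : ℝ) := by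
        exact_mod_cast hN1.trans hn
      have hnpos : (0 : ℝ) < n := by linarith
      have hαn : α ≤ (n : ℝ) := le_trans hNα (by exact_mod_cast hn)
      have hrec : a (n + 1) = a n * ((n : ℝ) - α) / (n + 1) := by
        rw [ha]
        simp only [genBinom_succ]
        rw [abs_div, abs_mul]
        congr 1
        · congr 1
          rw [abs_sub_comm, abs_of_nonneg (by linarith)]
        · rw [abs_of_nonneg (by positivity)]
      -- Bernoulli
      have hber : ((n : ℝ) - α) / (n + 1) ≤ ((n : ℝ) / (n + 1)) ^ (1 + α) := by
        have := one_add_mul_self_le_rpow_one_add (s := -(1 / ((n : ℝ) + 1)))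
          (by rw [neg_le, neg_neg]; rw [div_le_one (by positivity)]; linarith)
          (p := 1 + α) (by linarith)
        have h1 : 1 + (1 + α) * -(1 / ((n : ℝ) + 1)) = ((n : ℝ) - α) / (n + 1) := by
          field_simp; ring
        have h2 : (1 + -(1 / ((n : ℝ) + 1))) = (n : ℝ) / (n + 1) := by
          field_simp; ring
        rw [h1, h2] at this
        exact this
      have hsplit : ((n : ℝ) / (n + 1)) ^ (1 + α) * ((n : ℝ) + 1) ^ (1 + α) = (n : ℝ) ^ (1 + α) := by
        rw [← Real.mul_rpow (by positivity) (by positivity)]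
        congr 1
        field_simp
      push_cast
      calc a (n + 1) * ((n : ℝ) + 1) ^ (1 + α)
          = a n * (((n : ℝ) - α) / (n + 1)) * ((n : ℝ) + 1) ^ (1 + α) := by
            rw [hrec]; ring
        _ ≤ a n * (((n : ℝ) / (n + 1)) ^ (1 + α)) * ((n : ℝ) + 1) ^ (1 + α) := by
            apply mul_le_mul_of_nonneg_right _ (by positivity)
            exact mul_le_mul_of_nonneg_left hber (abs_nonneg _)
        _ = a n * (n : ℝ) ^ (1 + α) := by rw [mul_assoc, hsplit]
        _ ≤ M := ih
  -- comparison
  have hsum : Summable (fun n : ℕ => M * (((n : ℝ)) ^ (1 + α))⁻¹) :=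
    ((Real.summable_nat_rpow_inv.mpr (by linarith)).mul_left M)
  rw [← summable_nat_add_iff N]
  refine Summable.of_nonneg_of_le (fun n => abs_nonneg _) (fun n => ?_)
    ((summable_nat_add_iff N).mpr hsum)
  · show a (n + N) ≤ M * (((n + N : ℕ) : ℝ) ^ (1 + α))⁻¹
    have hpos : (0 : ℝ) < ((n + N : ℕ) : ℝ) ^ (1 + α) := by
      apply Real.rpow_pos_of_pos
      exact_mod_cast Nat.lt_of_lt_of_le (Nat.lt_of_lt_of_le Nat.zero_lt_one hN1) (Nat.le_add_left N n)
    have hk := key (n + N) (Nat.le_add_left N n)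
    rw [← le_div_iff₀ hpos] at hk
    rwa [mul_comm, inv_mul_eq_div]

/-- `κ₂ⁿ(β) = (−1)ⁿ b₀^β Σ_{k=0}^{n} (b₂/b₀)^k C(β,k) C(β,n−k)`,
where `b₀, b₂` are formed from the fixed parameter `α`. -/
noncomputable def kappa2 (α β : ℝ) (n : ℕ) : ℝ :=
  (-1 : ℝ) ^ n * b0 α ^ β *
    ∑ k ∈ Finset.range (n + 1), (b2 α / b0 α) ^ k * genBinom β k * genBinom β (n - k)

/-- For every `α ≥ 1`, the series `Σ |κ₂ⁿ(α)|` converges: the power series of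
`(b₀ + b₁z + b₂z²)^α` at `0` is absolutely convergent at `z = ±1`. -/
theorem kappa2_abs_summable (α : ℝ) (hα : 1 ≤ α) :
    Summable (fun n : ℕ => |kappa2 α α n|) := by
  have hb0 : 0 < b0 α := div_pos (by linarith) (by linarith)
  have hb2 : |b2 α| ≤ b0 α := by
    unfold b0 b2
    rw [abs_div, abs_of_pos (show (0:ℝ) < 2*α by linarith)]
    gcongr
    exact abs_le.mpr ⟨by linarith, by linarith⟩
  have hc : |b2 α / b0 α| ≤ 1 := by
    rw [abs_div, div_le_one (abs_pos.mpr hb0.ne'), abs_of_pos hb0]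
    exact hb2
  set f : ℕ → ℝ := fun k => |b2 α / b0 α| ^ k * |genBinom α k| with hfdef
  set g : ℕ → ℝ := fun k => |genBinom α k| with hgdef
  have hg : Summable g := summable_abs_genBinom α hα
  have hf : Summable f := by
    refine Summable.of_nonneg_of_le (fun k => by positivity) (fun k => ?_) hg
    have : |b2 α / b0 α| ^ k ≤ 1 := pow_le_one₀ (abs_nonneg _) hc
    calc f k ≤ 1 * |genBinom α k| :=
          mul_le_mul_of_nonneg_right this (abs_nonneg _)
      _ = g k := one_mul _
  have hfn : Summable fun k => ‖f k‖ := by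
    simpa only [hfdef, Real.norm_eq_abs, abs_mul, abs_pow, abs_abs] using hf
  have hgn : Summable fun k => ‖g k‖ := by
    simpa only [hgdef, Real.norm_eq_abs, abs_abs] using hg
  have hS := summable_norm_sum_mul_range_of_summable_norm hfn hgn
  have hrp : 0 < b0 α ^ α := Real.rpow_pos_of_pos hb0 α
  refine Summable.of_nonneg_of_le (fun n => abs_nonneg _) (fun n => ?_) (hS.mul_left (b0 α ^ α))
  show |kappa2 α α n| ≤ b0 α ^ α * ‖∑ k ∈ Finset.range (n + 1), f k * g (n - k)‖
  rw [kappa2, abs_mul, abs_mul, abs_pow, abs_neg, abs_one, one_pow, one_mul,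
    abs_of_pos hrp]
  refine mul_le_mul_of_nonneg_left ?_ hrp.le
  have h1 : |∑ k ∈ Finset.range (n + 1), (b2 α / b0 α) ^ k * genBinom α k * genBinom α (n - k)|
      ≤ ∑ k ∈ Finset.range (n + 1), f k * g (n - k) := by
    refine (Finset.abs_sum_le_sum_abs _ _).trans (le_of_eq ?_)
    refine Finset.sum_congr rfl fun k _ => ?_
    rw [abs_mul, abs_mul, abs_pow]
  exact h1.trans (le_abs_self _)
end

section
/- Let α ≥ 1 be real and set q(t) = b₀ + b₁t + b₂t². For x > 0 one has q(e^{−x}) > 0; define φ(x) = e^x x^{−α} q(e^{−x})^α [1 + η q(e^{−x})²]. Then, as x → 0⁺, φ(x) = 1 + ϱ₂ x² + ϱ₄ x⁴ + o(x⁴), where ϱ₂ = (3α³−19α²+36α−16)/(24α) and ϱ₄ = −(30α⁶−180α⁵+459α⁴−835α³+1210α²−990α+300)/(720α³); in particular the first- and third-order coefficients of the expansion of φ at 0 vanish. -/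
open Filter Asymptotics Real

/-- `b₁ = −2(α−1)/α`. -/
noncomputable def b1 (α : ℝ) : ℝ := -(2 * (α - 1)) / α

/-- `η = (3α−2)(α−2)(α−1)/(24α)`. -/
noncomputable def etaC (α : ℝ) : ℝ := (3 * α - 2) * (α - 2) * (α - 1) / (24 * α)

/-- The quadratic `q(t) = b₀ + b₁ t + b₂ t²`. -/
noncomputable def qPoly (α t : ℝ) : ℝ := b0 α + b1 α * t + b2 α * t ^ 2

/-- `φ(x) = eˣ x^{−α} q(e^{−x})^α [1 + η q(e^{−x})²]`. -/
noncomputable def phiFn (α x : ℝ) : ℝ :=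
  Real.exp x * x ^ (-α) * qPoly α (Real.exp (-x)) ^ α *
    (1 + etaC α * qPoly α (Real.exp (-x)) ^ (2 : ℕ))


lemma key_step {f f' : ℝ → ℝ} {n : ℕ} (hf0 : f 0 = 0)
    (hd : ∀ᶠ x in nhds (0:ℝ), HasDerivAt f (f' x) x)
    (h : f' =o[nhds 0] fun x => x ^ n) :
    f =o[nhds 0] fun x => x ^ (n + 1) := by
  rw [isLittleO_iff] at h ⊢
  intro ε hε
  have h1 := h hε
  rw [Metric.eventually_nhds_iff] at h1 hd ⊢
  obtain ⟨δ₁, hδ₁, H1⟩ := h1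
  obtain ⟨δ₂, hδ₂, H2⟩ := hd
  refine ⟨min δ₁ δ₂, lt_min hδ₁ hδ₂, fun y hy => ?_⟩
  have hy' : |y| < min δ₁ δ₂ := by simpa [Real.dist_eq] using hy
  have hsub : ∀ t ∈ Set.uIcc (0:ℝ) y, |t| ≤ |y| := by
    intro t ht
    rcases Set.mem_uIcc.1 ht with ⟨h4, h5⟩ | ⟨h4, h5⟩ <;> cases' abs_cases y with hc hc <;>
      cases' abs_cases t with hct hct <;> nlinarith
  have key := Convex.norm_image_sub_le_of_norm_hasDerivWithin_le (𝕜 := ℝ)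
    (f := f) (f' := f') (s := Set.uIcc (0:ℝ) y) (C := ε * |y| ^ n)
    (x := (0:ℝ)) (y := y)
    (fun t ht => by
      have h3 : dist t 0 < δ₂ := by
        simpa [Real.dist_eq] using lt_of_le_of_lt (hsub t ht) (hy'.trans_le (min_le_right _ _))
      exact (H2 h3).hasDerivWithinAt)
    (fun t ht => by
      have h3 : dist t 0 < δ₁ := by
        simpa [Real.dist_eq] using lt_of_le_of_lt (hsub t ht) (hy'.trans_le (min_le_left _ _))
      calc ‖f' t‖ ≤ ε * ‖t ^ n‖ := H1 h3
      _ ≤ ε * |y| ^ n := by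
          rw [norm_pow, Real.norm_eq_abs]
          exact mul_le_mul_of_nonneg_left (pow_le_pow_left₀ (abs_nonneg _) (hsub t ht) n) hε.le)
    (convex_uIcc _ _) Set.left_mem_uIcc Set.right_mem_uIcc
  rw [hf0, sub_zero, sub_zero] at key
  calc ‖f y‖ ≤ ε * |y| ^ n * ‖y‖ := key
  _ = ε * ‖y ^ (n + 1)‖ := by rw [Real.norm_eq_abs, Real.norm_eq_abs, abs_pow, pow_succ]; ring

lemma exp_rem1 : (fun v : ℝ => exp v - (1 + v)) =o[nhds 0] fun v => v ^ 1 := by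
  have h := (Real.hasDerivAt_exp 0)
  rw [hasDerivAt_iff_isLittleO] at h
  simp only [Real.exp_zero, sub_zero, smul_eq_mul, mul_one] at h
  refine h.congr (fun v => by ring) (fun v => by ring)

lemma exp_rem (n : ℕ) (hn : 1 ≤ n) (hn4 : n ≤ 5) :
    (fun v : ℝ => exp v - ∑ j ∈ Finset.range (n+1), v ^ j / (Nat.factorial j)) =o[nhds 0]
      fun v => v ^ n := by
  induction n with
  | zero => omega
  | succ m ih =>
    rcases Nat.eq_or_lt_of_le hn with h1 | h1
    · have : m = 0 := by omega
      subst this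
      refine exp_rem1.congr (fun v => by simp [Finset.sum_range_succ, Nat.factorial]) (fun v => rfl)
    · have hm : 1 ≤ m := by omega
      have ihm := ih hm (by omega)
      refine key_step ?_ ?_ ihm
      · show rexp 0 - ∑ j ∈ Finset.range (m+1+1), (0:ℝ) ^ j / (Nat.factorial j) = 0
        rw [Real.exp_zero, Finset.sum_eq_single 0]
        · simp
        · intro j _ hj0; simp [zero_pow hj0]
        · simp
      · filter_upwards with v
        have hall : ∀ k : ℕ, HasDerivAt (fun v : ℝ => ∑ j ∈ Finset.range (k+1), v ^ j / (Nat.factorial j))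
            (∑ j ∈ Finset.range k, v ^ j / (Nat.factorial j)) v := by
          intro k
          induction k with
          | zero => simpa using (hasDerivAt_const v (1:ℝ))
          | succ l ihl =>
            have h2 : HasDerivAt (fun v : ℝ => v ^ (l+1) / (Nat.factorial (l+1)))
                (v ^ l / (Nat.factorial l)) v := by
              have := (hasDerivAt_pow (l+1) v).div_const ((Nat.factorial (l+1) : ℝ))
              refine this.congr_deriv ?_
              rw [Nat.factorial_succ, Nat.add_sub_cancel]
              push_cast
              field_simp
            have heq : (fun v : ℝ => ∑ j ∈ Finset.range (l+1+1), v ^ j / (Nat.factorial j))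
                = fun v : ℝ => (∑ j ∈ Finset.range (l+1), v ^ j / (Nat.factorial j))
                  + v ^ (l+1) / (Nat.factorial (l+1)) := by
              funext w; rw [Finset.sum_range_succ]
            rw [heq, Finset.sum_range_succ (n := l)]
            exact ihl.add h2
        exact (Real.hasDerivAt_exp v).sub (hall (m+1))

lemma exp_rem4 : (fun v : ℝ => exp v - (1 + v + v^2/2 + v^3/6 + v^4/24)) =o[nhds 0]
    fun v => v ^ 4 := by
  refine (exp_rem 4 (by norm_num) (by norm_num)).congr (fun v => ?_) (fun v => rfl)
  simp [Finset.sum_range_succ, Nat.factorial]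
  try ring

lemma exp_rem5 : (fun v : ℝ => exp v - (1 + v + v^2/2 + v^3/6 + v^4/24 + v^5/120)) =o[nhds 0]
    fun v => v ^ 5 := by
  refine (exp_rem 5 (by norm_num) (by norm_num)).congr (fun v => ?_) (fun v => rfl)
  simp [Finset.sum_range_succ, Nat.factorial]
  try ring

lemma log_rem : (fun u : ℝ => Real.log (1 + u) - (u - u^2/2 + u^3/3 - u^4/4)) =o[nhds 0]
    fun u => u ^ 4 := by
  have h4 : (fun u : ℝ => u^4 / (1+u)) =o[nhds 0] fun u => u ^ 3 := by
    have ht : Tendsto (fun u : ℝ => u / (1+u)) (nhds 0) (nhds 0) := by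
      have : Tendsto (fun u : ℝ => u / (1+u)) (nhds 0) (nhds (0 / (1+0))) :=
        (tendsto_id).div (tendsto_const_nhds.add tendsto_id) (by norm_num)
      simpa using this
    have h1 : (fun u : ℝ => u / (1+u)) =o[nhds 0] (fun _ => (1:ℝ)) :=
      (isLittleO_one_iff ℝ).2 ht
    have h2 := (isBigO_refl (fun u : ℝ => u ^ 3) (nhds 0)).mul_isLittleO h1
    refine h2.congr (fun u => by ring) (fun u => by ring)
  have hk := key_step (f := fun u : ℝ => Real.log (1 + u) - (u - u^2/2 + u^3/3 - u^4/4))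
    (f' := fun u : ℝ => u^4 / (1+u)) (n := 3) (by norm_num) ?_ h4
  · exact hk
  · have hmem : ∀ᶠ u in nhds (0:ℝ), 1 + u ≠ 0 := by
      rw [Metric.eventually_nhds_iff]
      refine ⟨1, one_pos, fun u hu => ?_⟩
      rw [Real.dist_eq, sub_zero] at hu
      cases' abs_cases u with h h <;> nlinarith
    filter_upwards [hmem] with u hu
    have hlog : HasDerivAt (fun u : ℝ => Real.log (1 + u)) ((1+u)⁻¹ * 1) u := by
      have h1 : HasDerivAt (fun u : ℝ => 1 + u) 1 u := by
        simpa using (hasDerivAt_id u).const_add (1:ℝ)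
      exact (Real.hasDerivAt_log hu).comp u h1
    have hpoly : HasDerivAt (fun u : ℝ => u - u^2/2 + u^3/3 - u^4/4)
        (1 - u + u^2 - u^3) u := by
      have h1 := (((hasDerivAt_id u).sub ((hasDerivAt_pow 2 u).div_const 2)).add
        ((hasDerivAt_pow 3 u).div_const 3)).sub ((hasDerivAt_pow 4 u).div_const 4)
      refine h1.congr_deriv ?_
      push_cast
      ring
    have hd := hlog.sub hpoly
    refine hd.congr_deriv ?_
    field_simp
    ring

/-- degree-4 polynomial -/
def P4 (a₀ a₁ a₂ a₃ a₄ : ℝ) : ℝ → ℝ := fun x => a₀ + a₁*x + a₂*x^2 + a₃*x^3 + a₄*x^4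

/-- `f` agrees with the polynomial to order `o(x⁴)` as `x → 0⁺`. -/
def Ap (f : ℝ → ℝ) (a₀ a₁ a₂ a₃ a₄ : ℝ) : Prop :=
  (fun x => f x - P4 a₀ a₁ a₂ a₃ a₄ x) =o[nhdsWithin (0:ℝ) (Set.Ioi 0)] fun x => x ^ 4

namespace Ap

lemma tendsto_id' : Tendsto (fun x : ℝ => x) (nhdsWithin (0:ℝ) (Set.Ioi 0)) (nhds 0) :=
  tendsto_id.mono_left nhdsWithin_le_nhds

lemma pow_littleO {m n : ℕ} (h : n < m) :
    (fun x : ℝ => x ^ m) =o[nhdsWithin (0:ℝ) (Set.Ioi 0)] fun x => x ^ n :=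
  (isLittleO_pow_pow h).mono nhdsWithin_le_nhds

lemma pow_bigO_one {n : ℕ} (hn : 0 < n) :
    (fun x : ℝ => x ^ n) =O[nhdsWithin (0:ℝ) (Set.Ioi 0)] fun _ => (1:ℝ) :=
  Filter.Tendsto.isBigO_one ℝ (by simpa [zero_pow hn.ne'] using (tendsto_id'.pow n))

lemma P4_bigO_one (a₀ a₁ a₂ a₃ a₄ : ℝ) :
    (fun x => P4 a₀ a₁ a₂ a₃ a₄ x) =O[nhdsWithin (0:ℝ) (Set.Ioi 0)] fun _ => (1:ℝ) := by
  apply Filter.Tendsto.isBigO_one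
  have : Tendsto (fun x => P4 a₀ a₁ a₂ a₃ a₄ x) (nhds 0) (nhds (P4 a₀ a₁ a₂ a₃ a₄ 0)) := by
    apply Continuous.tendsto
    unfold P4; continuity
  exact this.mono_left nhdsWithin_le_nhds

lemma tendsto {f : ℝ → ℝ} {a₀ a₁ a₂ a₃ a₄ : ℝ} (hf : Ap f a₀ a₁ a₂ a₃ a₄) :
    Tendsto f (nhdsWithin (0:ℝ) (Set.Ioi 0)) (nhds a₀) := by
  have h1 : Tendsto (fun x => f x - P4 a₀ a₁ a₂ a₃ a₄ x) (nhdsWithin (0:ℝ) (Set.Ioi 0)) (nhds 0) := by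
    rw [← isLittleO_one_iff ℝ]
    exact hf.trans_isBigO (pow_bigO_one (by norm_num))
  have h2 : Tendsto (fun x => P4 a₀ a₁ a₂ a₃ a₄ x) (nhdsWithin (0:ℝ) (Set.Ioi 0)) (nhds a₀) := by
    have : Tendsto (fun x => P4 a₀ a₁ a₂ a₃ a₄ x) (nhds 0) (nhds (P4 a₀ a₁ a₂ a₃ a₄ 0)) := by
      apply Continuous.tendsto; unfold P4; continuity
    have h0 : P4 a₀ a₁ a₂ a₃ a₄ 0 = a₀ := by unfold P4; ring
    rw [h0] at this
    exact this.mono_left nhdsWithin_le_nhds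
  simpa using h1.add h2

lemma bigO_one {f : ℝ → ℝ} {a₀ a₁ a₂ a₃ a₄ : ℝ} (hf : Ap f a₀ a₁ a₂ a₃ a₄) :
    f =O[nhdsWithin (0:ℝ) (Set.Ioi 0)] fun _ => (1:ℝ) :=
  Filter.Tendsto.isBigO_one ℝ hf.tendsto

lemma const (c : ℝ) : Ap (fun _ => c) c 0 0 0 0 := by
  unfold Ap P4
  refine (isLittleO_zero _ _).congr (fun x => by ring) (fun x => rfl)

lemma idf : Ap (fun x => x) 0 1 0 0 0 := by
  unfold Ap P4
  refine (isLittleO_zero _ _).congr (fun x => by ring) (fun x => rfl)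

lemma add {f g : ℝ → ℝ} {a₀ a₁ a₂ a₃ a₄ b₀ b₁ b₂ b₃ b₄ : ℝ}
    (hf : Ap f a₀ a₁ a₂ a₃ a₄) (hg : Ap g b₀ b₁ b₂ b₃ b₄) :
    Ap (fun x => f x + g x) (a₀+b₀) (a₁+b₁) (a₂+b₂) (a₃+b₃) (a₄+b₄) := by
  refine (IsLittleO.add hf hg).congr (fun x => ?_) (fun x => rfl)
  unfold P4; ring

lemma smul {f : ℝ → ℝ} {a₀ a₁ a₂ a₃ a₄ : ℝ} (c : ℝ) (hf : Ap f a₀ a₁ a₂ a₃ a₄) :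
    Ap (fun x => c * f x) (c*a₀) (c*a₁) (c*a₂) (c*a₃) (c*a₄) := by
  refine (hf.const_mul_left c).congr (fun x => ?_) (fun x => rfl)
  unfold P4; ring

lemma congr_ev {f g : ℝ → ℝ} {a₀ a₁ a₂ a₃ a₄ : ℝ} (hf : Ap f a₀ a₁ a₂ a₃ a₄)
    (h : ∀ x ∈ Set.Ioi (0:ℝ), f x = g x) : Ap g a₀ a₁ a₂ a₃ a₄ := by
  refine hf.congr' ?_ EventuallyEq.rfl
  filter_upwards [self_mem_nhdsWithin] with x hx
  rw [h x hx]

lemma of_littleO {f g : ℝ → ℝ} {a₀ a₁ a₂ a₃ a₄ : ℝ} (hf : Ap f a₀ a₁ a₂ a₃ a₄)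
    (h : (fun x => g x - f x) =o[nhdsWithin (0:ℝ) (Set.Ioi 0)] fun x => x ^ 4) :
    Ap g a₀ a₁ a₂ a₃ a₄ := by
  refine (h.add hf).congr (fun x => by unfold P4; ring) (fun x => rfl)

lemma tail1 (c₀ c₁ c₂ c₃ : ℝ) :
    (fun x : ℝ => x^5 * (c₀ + c₁*x + c₂*x^2 + c₃*x^3)) =o[nhdsWithin (0:ℝ) (Set.Ioi 0)]
      fun x => x ^ 4 := by
  have h1 := (pow_littleO (by norm_num : 4 < 5)).mul_isBigO (P4_bigO_one c₀ c₁ c₂ c₃ 0)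
  refine h1.congr (fun x => by unfold P4; ring) (fun x => by ring)

lemma mul {f g : ℝ → ℝ} {a₀ a₁ a₂ a₃ a₄ b₀ b₁ b₂ b₃ b₄ : ℝ}
    (hf : Ap f a₀ a₁ a₂ a₃ a₄) (hg : Ap g b₀ b₁ b₂ b₃ b₄) :
    Ap (fun x => f x * g x) (a₀*b₀) (a₀*b₁+a₁*b₀) (a₀*b₂+a₁*b₁+a₂*b₀)
      (a₀*b₃+a₁*b₂+a₂*b₁+a₃*b₀) (a₀*b₄+a₁*b₃+a₂*b₂+a₃*b₁+a₄*b₀) := by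
  have T1 := hf.mul_isBigO hg.bigO_one
  have T2 := (P4_bigO_one a₀ a₁ a₂ a₃ a₄).mul_isLittleO hg
  have T3 := tail1 (a₁*b₄+a₂*b₃+a₃*b₂+a₄*b₁) (a₂*b₄+a₃*b₃+a₄*b₂) (a₃*b₄+a₄*b₃) (a₄*b₄)
  have T1' := T1.congr (f₂ := fun x => (f x - P4 a₀ a₁ a₂ a₃ a₄ x) * g x)
    (fun x => rfl) (fun x => (by ring : x^4 * 1 = x^4))
  have T2' := T2.congr (f₂ := fun x => P4 a₀ a₁ a₂ a₃ a₄ x * (g x - P4 b₀ b₁ b₂ b₃ b₄ x))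
    (fun x => rfl) (fun x => (by ring : 1 * x^4 = x^4))
  have S := (T1'.add T2').add T3
  refine S.congr (fun x => ?_) (fun x => by ring)
  unfold P4; ring

lemma shift2 {f : ℝ → ℝ} {a₀ a₁ a₂ a₃ a₄ : ℝ} (hf : Ap f a₀ a₁ a₂ a₃ a₄) :
    Ap (fun x => x^2 * f x) 0 0 a₀ a₁ a₂ := by
  have T1 : (fun x : ℝ => x^2 * (f x - P4 a₀ a₁ a₂ a₃ a₄ x)) =o[nhdsWithin (0:ℝ) (Set.Ioi 0)]
      fun x => x ^ 4 := by
    have h1 := (isBigO_refl (fun x : ℝ => x^2) (nhdsWithin (0:ℝ) (Set.Ioi 0))).mul_isLittleO hf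
    have h2 : (fun x : ℝ => x^2 * x^4) =O[nhdsWithin (0:ℝ) (Set.Ioi 0)] fun x => x ^ 4 := by
      refine ((pow_littleO (by norm_num : 4 < 6)).isBigO).congr (fun x => by ring) (fun x => rfl)
    exact h1.trans_isBigO h2
  have T3 := tail1 a₃ a₄ 0 0
  have S := T1.add T3
  refine S.congr (fun x => ?_) (fun x => by ring)
  unfold P4; ring

lemma isBigO_id {f : ℝ → ℝ} {a₀ a₁ a₂ a₃ a₄ : ℝ} (hf : Ap f a₀ a₁ a₂ a₃ a₄) (h0 : a₀ = 0) :
    f =O[nhdsWithin (0:ℝ) (Set.Ioi 0)] fun x => x := by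
  have h1 : (fun x => f x - P4 a₀ a₁ a₂ a₃ a₄ x) =O[nhdsWithin (0:ℝ) (Set.Ioi 0)] fun x => x := by
    have := (hf.trans_isBigO (pow_littleO (by norm_num : 1 < 4)).isBigO).isBigO
    exact this.congr (fun x => rfl) (fun x => pow_one x)
  have h2 : (fun x => P4 a₀ a₁ a₂ a₃ a₄ x) =O[nhdsWithin (0:ℝ) (Set.Ioi 0)] fun x => x := by
    have h3 := (isBigO_refl (fun x : ℝ => x) (nhdsWithin (0:ℝ) (Set.Ioi 0))).mul
      (P4_bigO_one a₁ a₂ a₃ a₄ 0)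
    refine (h3.congr (fun x => ?_) (fun x => by ring))
    unfold P4; rw [h0]; ring
  have := h1.add h2
  refine this.congr (fun x => by ring) (fun x => rfl)

end Ap

lemma Ap.coeffs {f : ℝ → ℝ} {a₀ a₁ a₂ a₃ a₄ b₀ b₁ b₂ b₃ b₄ : ℝ} (hf : Ap f a₀ a₁ a₂ a₃ a₄)
    (h₀ : a₀ = b₀) (h₁ : a₁ = b₁) (h₂ : a₂ = b₂) (h₃ : a₃ = b₃) (h₄ : a₄ = b₄) :
    Ap f b₀ b₁ b₂ b₃ b₄ := by subst h₀ h₁ h₂ h₃ h₄; exact hf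

lemma comp_log {m : ℝ → ℝ} {a₁ a₂ a₃ a₄ : ℝ} (hm : Ap m 0 a₁ a₂ a₃ a₄) :
    (fun x => Real.log (1 + m x) - (m x - (m x)^2/2 + (m x)^3/3 - (m x)^4/4))
      =o[nhdsWithin (0:ℝ) (Set.Ioi 0)] fun x => x ^ 4 := by
  have h1 := log_rem.comp_tendsto hm.tendsto
  exact h1.trans_isBigO ((hm.isBigO_id rfl).pow 4)

lemma comp_exp {v : ℝ → ℝ} {a₁ a₂ a₃ a₄ : ℝ} (hv : Ap v 0 a₁ a₂ a₃ a₄) :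
    (fun x => Real.exp (v x) - (1 + v x + (v x)^2/2 + (v x)^3/6 + (v x)^4/24))
      =o[nhdsWithin (0:ℝ) (Set.Ioi 0)] fun x => x ^ 4 := by
  have h1 := exp_rem4.comp_tendsto hv.tendsto
  exact h1.trans_isBigO ((hv.isBigO_id rfl).pow 4)

noncomputable def uF (x : ℝ) : ℝ := (1 - Real.exp (-x)) / x
noncomputable def sF (α x : ℝ) : ℝ := 1 + (α - 2)/(2*α) * (1 - Real.exp (-x))
noncomputable def wF (α x : ℝ) : ℝ := uF x * sF α x
noncomputable def mF (α x : ℝ) : ℝ := wF α x - 1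
noncomputable def vF (α x : ℝ) : ℝ := x + α * Real.log (1 + mF α x)

lemma q_eq (α : ℝ) (hα0 : α ≠ 0) {x : ℝ} (hx : 0 < x) :
    qPoly α (Real.exp (-x)) = x * wF α x := by
  unfold qPoly wF uF sF b0 b1 b2
  field_simp
  ring

lemma q_pos (α : ℝ) (hα : 1 ≤ α) {x : ℝ} (hx : 0 < x) : 0 < qPoly α (Real.exp (-x)) := by
  have hα0 : (0:ℝ) < α := lt_of_lt_of_le one_pos hα
  have ht0 : 0 < Real.exp (-x) := Real.exp_pos _
  have ht1 : Real.exp (-x) < 1 := Real.exp_lt_one_iff.2 (by linarith)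
  set t := Real.exp (-x) with ht
  have hqe : qPoly α t = (1 - t) * (3*α - 2 - (α - 2)*t) / (2*α) := by
    unfold qPoly b0 b1 b2
    field_simp
    ring
  rw [hqe]
  have h1 : 0 < 1 - t := by linarith
  have h2 : 0 < 3*α - 2 - (α - 2)*t := by nlinarith
  positivity

lemma w_pos (α : ℝ) (hα : 1 ≤ α) {x : ℝ} (hx : 0 < x) : 0 < wF α x := by
  have h1 := q_pos α hα hx
  rw [q_eq α (by linarith) hx] at h1
  nlinarith

lemma phi_eq (α : ℝ) (hα : 1 ≤ α) {x : ℝ} (hx : 0 < x) :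
    phiFn α x = Real.exp (vF α x) * (1 + etaC α * (x^2 * (wF α x * wF α x))) := by
  have hα0 : α ≠ 0 := by intro h; rw [h] at hα; norm_num at hα
  have hw := w_pos α hα hx
  have hvf : vF α x = x + α * Real.log (wF α x) := by
    unfold vF
    rw [show (1 + mF α x) = wF α x from by unfold mF; ring]
  unfold phiFn
  rw [q_eq α hα0 hx]
  rw [Real.rpow_def_of_pos (mul_pos hx hw), Real.rpow_def_of_pos hx,
    Real.log_mul (ne_of_gt hx) (ne_of_gt hw), ← Real.exp_add, ← Real.exp_add, hvf]
  have harg : x + Real.log x * (-α) + (Real.log x + Real.log (wF α x)) * α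
      = x + α * Real.log (wF α x) := by ring
  rw [harg]
  congr 1
  ring

set_option maxHeartbeats 4000000 in
/-- For `α ≥ 1`: `q(e^{−x}) > 0` for all `x > 0`, and as `x → 0⁺`,
`φ(x) = 1 + ϱ₂ x² + ϱ₄ x⁴ + o(x⁴)` with
`ϱ₂ = (3α³−19α²+36α−16)/(24α)` and
`ϱ₄ = −(30α⁶−180α⁵+459α⁴−835α³+1210α²−990α+300)/(720α³)`. -/
theorem phiFn_expansion (α : ℝ) (hα : 1 ≤ α) :
    (∀ x : ℝ, 0 < x → 0 < qPoly α (Real.exp (-x))) ∧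
    (fun x : ℝ =>
        phiFn α x -
          (1 + (3 * α ^ 3 - 19 * α ^ 2 + 36 * α - 16) / (24 * α) * x ^ 2 +
            (-((30 * α ^ 6 - 180 * α ^ 5 + 459 * α ^ 4 - 835 * α ^ 3 + 1210 * α ^ 2 -
                990 * α + 300) / (720 * α ^ 3))) * x ^ 4))
      =o[nhdsWithin 0 (Set.Ioi 0)] (fun x : ℝ => x ^ 4) := by
  have hα0 : α ≠ 0 := by intro h; rw [h] at hα; norm_num at hα
  refine ⟨fun x hx => q_pos α hα hx, ?_⟩
  have hneg : Tendsto (fun x : ℝ => -x) (nhdsWithin (0:ℝ) (Set.Ioi 0)) (nhds 0) := by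
    simpa using Ap.tendsto_id'.neg
  -- order-5 expansion of 1 - exp(-x)
  have hm1_5 : (fun x : ℝ => (1 - Real.exp (-x)) - (x - x^2/2 + x^3/6 - x^4/24 + x^5/120))
      =o[nhdsWithin (0:ℝ) (Set.Ioi 0)] fun x => x ^ 5 := by
    have h0 := exp_rem5.comp_tendsto hneg
    have hO : ((fun v : ℝ => v^5) ∘ fun x : ℝ => -x) =O[nhdsWithin (0:ℝ) (Set.Ioi 0)]
        fun x => x ^ 5 := by
      refine isBigO_of_le _ (fun x => ?_)
      simp [Function.comp]
    have h1 := (h0.trans_isBigO hO).neg_left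
    refine h1.congr (fun x => ?_) (fun x => rfl)
    simp only [Function.comp_apply]
    ring
  -- order-4 expansion of 1 - exp(-x)
  have hm14 : Ap (fun x : ℝ => 1 - Real.exp (-x)) 0 1 (-1/2) (1/6) (-1/24) := by
    have h0 := exp_rem4.comp_tendsto hneg
    have hO : ((fun v : ℝ => v^4) ∘ fun x : ℝ => -x) =O[nhdsWithin (0:ℝ) (Set.Ioi 0)]
        fun x => x ^ 4 := by
      refine isBigO_of_le _ (fun x => ?_)
      simp [Function.comp]
    have h1 := (h0.trans_isBigO hO).neg_left
    unfold Ap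
    refine h1.congr (fun x => ?_) (fun x => rfl)
    simp only [Function.comp_apply]
    unfold P4
    ring
  -- u = (1 - exp(-x))/x
  have hu : Ap uF 1 (-1/2) (1/6) (-1/24) (1/120) := by
    unfold Ap
    have h3 := (isBigO_refl (fun x : ℝ => x⁻¹) (nhdsWithin (0:ℝ) (Set.Ioi 0))).mul_isLittleO hm1_5
    refine h3.congr' ?_ ?_
    · filter_upwards [self_mem_nhdsWithin] with x hx
      have hx0 : x ≠ 0 := ne_of_gt hx
      unfold uF P4
      field_simp
      ring
    · filter_upwards [self_mem_nhdsWithin] with x hx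
      have hx0 : x ≠ 0 := ne_of_gt hx
      field_simp
  have hs : Ap (fun x => sF α x) (((1)):ℝ) ((((-2) + (1)*α)/(2*α)):ℝ) ((((2) + (-1)*α)/(4*α)):ℝ) ((((-2) + (1)*α)/(12*α)):ℝ) ((((2) + (-1)*α)/(48*α)):ℝ) :=
    ((Ap.const 1).add (Ap.smul ((α-2)/(2*α)) hm14)).coeffs
      (by field_simp; try ring) (by field_simp; try ring) (by field_simp; try ring) (by field_simp; try ring) (by field_simp; try ring)
  have hw : Ap (fun x => wF α x) (((1)):ℝ) ((((-1))/(1*α)):ℝ) ((((3) + (-1)*α)/(3*α)):ℝ) ((((-7) + (3)*α)/(12*α)):ℝ) ((((15) + (-7)*α)/(60*α)):ℝ) :=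
    (hu.mul hs).coeffs
      (by field_simp; try ring) (by field_simp; try ring) (by field_simp; try ring) (by field_simp; try ring) (by field_simp; try ring)
  have hm : Ap (fun x => mF α x) ((0):ℝ) ((((-1))/(1*α)):ℝ) ((((3) + (-1)*α)/(3*α)):ℝ) ((((-7) + (3)*α)/(12*α)):ℝ) ((((15) + (-7)*α)/(60*α)):ℝ) :=
    ((hw.add (Ap.const (-1))).congr_ev (g := fun x => mF α x) (fun x _ => by unfold mF; ring)).coeffs
      (by field_simp; try ring) (by field_simp; try ring) (by field_simp; try ring) (by field_simp; try ring) (by field_simp; try ring)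
  have hm2 : Ap (fun x => mF α x * mF α x) ((0):ℝ) ((0):ℝ) ((((1))/(1*α^2)):ℝ) ((((-6) + (2)*α)/(3*α^2)):ℝ) ((((39) + (-21)*α + (2)*α^2)/(18*α^2)):ℝ) :=
    (hm.mul hm).coeffs
      (by field_simp; try ring) (by field_simp; try ring) (by field_simp; try ring) (by field_simp; try ring) (by field_simp; try ring)
  have hm3 : Ap (fun x => (mF α x * mF α x) * mF α x) ((0):ℝ) ((0):ℝ) ((0):ℝ) ((((-1))/(1*α^3)):ℝ) ((((3) + (-1)*α)/(1*α^3)):ℝ) :=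
    (hm2.mul hm).coeffs
      (by field_simp; try ring) (by field_simp; try ring) (by field_simp; try ring) (by field_simp; try ring) (by field_simp; try ring)
  have hm4 : Ap (fun x => (mF α x * mF α x) * (mF α x * mF α x)) ((0):ℝ) ((0):ℝ) ((0):ℝ) ((0):ℝ) ((((1))/(1*α^4)):ℝ) :=
    (hm2.mul hm2).coeffs
      (by field_simp; try ring) (by field_simp; try ring) (by field_simp; try ring) (by field_simp; try ring) (by field_simp; try ring)
  have hlogpoly : Ap (_) ((0):ℝ) ((((-1))/(1*α)):ℝ) ((((-3) + (6)*α + (-2)*α^2)/(6*α^2)):ℝ) ((((-4) + (12)*α + (-11)*α^2 + (3)*α^3)/(12*α^3)):ℝ) ((((-45) + (180)*α + (-255)*α^2 + (150)*α^3 + (-31)*α^4)/(180*α^4)):ℝ) :=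
    (hm.add ((Ap.smul (-1/2 : ℝ) hm2).add ((Ap.smul (1/3 : ℝ) hm3).add (Ap.smul (-1/4 : ℝ) hm4)))).coeffs
      (by field_simp; try ring) (by field_simp; try ring) (by field_simp; try ring) (by field_simp; try ring) (by field_simp; try ring)
  have hlogrem := comp_log hm
  have hlog : Ap (fun x => Real.log (1 + mF α x)) _ _ _ _ _ :=
    hlogpoly.of_littleO (hlogrem.congr (fun x => by ring) (fun x => rfl))
  have hv : Ap (fun x => x + α * Real.log (1 + mF α x)) ((0):ℝ) ((0):ℝ) ((((-3) + (6)*α + (-2)*α^2)/(6*α)):ℝ) ((((-4) + (12)*α + (-11)*α^2 + (3)*α^3)/(12*α^2)):ℝ) ((((-45) + (180)*α + (-255)*α^2 + (150)*α^3 + (-31)*α^4)/(180*α^3)):ℝ) :=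
    (Ap.idf.add (Ap.smul α hlog)).coeffs
      (by field_simp; try ring) (by field_simp; try ring) (by field_simp; try ring) (by field_simp; try ring) (by field_simp; try ring)
  have hv2 : Ap (_) ((0):ℝ) ((0):ℝ) ((0):ℝ) ((0):ℝ) ((((9) + (-36)*α + (48)*α^2 + (-24)*α^3 + (4)*α^4)/(36*α^2)):ℝ) :=
    (hv.mul hv).coeffs
      (by field_simp; try ring) (by field_simp; try ring) (by field_simp; try ring) (by field_simp; try ring) (by field_simp; try ring)
  have hv3 : Ap (_) ((0):ℝ) ((0):ℝ) ((0):ℝ) ((0):ℝ) ((0):ℝ) :=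
    (hv2.mul hv).coeffs
      (by field_simp; try ring) (by field_simp; try ring) (by field_simp; try ring) (by field_simp; try ring) (by field_simp; try ring)
  have hv4 : Ap (_) ((0):ℝ) ((0):ℝ) ((0):ℝ) ((0):ℝ) ((0):ℝ) :=
    (hv2.mul hv2).coeffs
      (by field_simp; try ring) (by field_simp; try ring) (by field_simp; try ring) (by field_simp; try ring) (by field_simp; try ring)
  have hexppoly : Ap (_) (((1)):ℝ) ((0):ℝ) ((((-3) + (6)*α + (-2)*α^2)/(6*α)):ℝ) ((((-4) + (12)*α + (-11)*α^2 + (3)*α^3)/(12*α^2)):ℝ) ((((-90) + (405)*α + (-690)*α^2 + (540)*α^3 + (-182)*α^4 + (20)*α^5)/(360*α^3)):ℝ) :=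
    ((Ap.const 1).add (hv.add ((Ap.smul (1/2 : ℝ) hv2).add ((Ap.smul (1/6 : ℝ) hv3).add (Ap.smul (1/24 : ℝ) hv4))))).coeffs
      (by field_simp; try ring) (by field_simp; try ring) (by field_simp; try ring) (by field_simp; try ring) (by field_simp; try ring)
  have hexprem := comp_exp hv
  have hexp : Ap (fun x => Real.exp (vF α x)) _ _ _ _ _ :=
    hexppoly.of_littleO (hexprem.congr (fun x => by unfold vF; ring) (fun x => rfl))
  have hw2 : Ap (fun x => wF α x * wF α x) (((1)):ℝ) ((((-2))/(1*α)):ℝ) ((((3) + (6)*α + (-2)*α^2)/(3*α^2)):ℝ) ((((-4) + (-1)*α + (1)*α^2)/(2*α^2)):ℝ) ((((195) + (-60)*α + (-11)*α^2)/(90*α^2)):ℝ) :=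
    (hw.mul hw).coeffs
      (by field_simp; try ring) (by field_simp; try ring) (by field_simp; try ring) (by field_simp; try ring) (by field_simp; try ring)
  have hxw := hw2.shift2
  have hG : Ap (fun x => 1 + etaC α * (x^2 * (wF α x * wF α x))) (((1)):ℝ) ((0):ℝ) ((((-4) + (12)*α + (-11)*α^2 + (3)*α^3)/(24*α)):ℝ) ((((4) + (-12)*α + (11)*α^2 + (-3)*α^3)/(12*α^2)):ℝ) ((((-12) + (12)*α + (47)*α^2 + (-81)*α^3 + (40)*α^4 + (-6)*α^5)/(72*α^3)):ℝ) :=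
    ((Ap.const 1).add (Ap.smul (etaC α) hxw)).coeffs
      (by unfold etaC; field_simp; try ring) (by unfold etaC; field_simp; try ring) (by unfold etaC; field_simp; try ring) (by unfold etaC; field_simp; try ring) (by unfold etaC; field_simp; try ring)
  have hphi : Ap (fun x => Real.exp (vF α x) * (1 + etaC α * (x^2 * (wF α x * wF α x)))) (((1)):ℝ) ((0):ℝ) ((((-16) + (36)*α + (-19)*α^2 + (3)*α^3)/(24*α)):ℝ) ((0):ℝ) ((((-300) + (990)*α + (-1210)*α^2 + (835)*α^3 + (-459)*α^4 + (180)*α^5 + (-30)*α^6)/(720*α^3)):ℝ) :=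
    (hexp.mul hG).coeffs
      (by field_simp; try ring) (by field_simp; try ring) (by field_simp; try ring) (by field_simp; try ring) (by field_simp; try ring)
  have hphiFn := hphi.congr_ev (g := fun x => phiFn α x)
    (fun x hx => (phi_eq α hα hx).symm)
  unfold Ap at hphiFn
  refine hphiFn.congr (fun x => ?_) (fun x => rfl)
  unfold P4
  field_simp
  ring
end

section
/- For every real α with 1 < α ≤ 2 and every s ∈ [0,π], one has −1 ≤ Z₁(α,s) ≤ cos(πα/2). -/
open Real

/-- `d₁ = b₀ − b₂ cos s`. -/
noncomputable def d1 (α s : ℝ) : ℝ := b0 α - b2 α * Real.cos s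

/-- `d₂ = −b₂ sin s`. -/
noncomputable def d2 (α s : ℝ) : ℝ := -(b2 α) * Real.sin s

/-- `θ = arctan(d₂/d₁)`. -/
noncomputable def thetaAngle (α s : ℝ) : ℝ := Real.arctan (d2 α s / d1 α s)

/-- `Z₁(β,s) = cos( ((s−π)/2 + θ)β − s )`, with `θ` formed from the fixed parameter `α`. -/
noncomputable def Z1 (α β s : ℝ) : ℝ :=
  Real.cos (((s - π) / 2 + thetaAngle α s) * β - s)

/-- Concavity of `sin` on `[0,π]`: `u * sin v ≤ v * sin u` for `0 ≤ u ≤ v ≤ π`. -/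
lemma mul_sin_le_mul_sin {u v : ℝ} (hu : 0 ≤ u) (huv : u ≤ v) (hv : v ≤ π) :
    u * Real.sin v ≤ v * Real.sin u := by
  rcases eq_or_lt_of_le (hu.trans huv) with hv0 | hv0
  · have hv0' : v = 0 := hv0.symm
    have hu0 : u = 0 := le_antisymm (hv0' ▸ huv) hu
    simp [hv0', hu0]
  · have ht0 : 0 ≤ u / v := div_nonneg hu hv0.le
    have ht1 : u / v ≤ 1 := by rw [div_le_one hv0]; exact huv
    have hmem0 : (0 : ℝ) ∈ Set.Icc 0 π := Set.mem_Icc.mpr ⟨le_rfl, Real.pi_pos.le⟩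
    have hmemv : v ∈ Set.Icc 0 π := Set.mem_Icc.mpr ⟨hv0.le, hv⟩
    have ha' : (0 : ℝ) ≤ 1 - u / v := by linarith
    have hab : (1 - u / v) + u / v = 1 := by ring
    have hc := strictConcaveOn_sin_Icc.concaveOn.2 hmem0 hmemv ha' ht0 hab
    simp only [smul_eq_mul, mul_zero, Real.sin_zero, zero_add] at hc
    rw [show u / v * v = u from div_mul_cancel₀ u hv0.ne'] at hc
    calc u * Real.sin v = v * (u / v * Real.sin v) := by field_simp
    _ ≤ v * Real.sin u := by
        exact mul_le_mul_of_nonneg_left hc hv0.le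

/-- `cos x ≤ cos a` on the band `[a, 2π − a]` for `a ∈ [0,π]`. -/
lemma cos_le_cos_band {a x : ℝ} (ha0 : 0 ≤ a) (haπ : a ≤ π) (h1 : a ≤ x)
    (h2 : x ≤ 2 * π - a) : Real.cos x ≤ Real.cos a := by
  rcases le_total x π with hx | hx
  · exact Real.cos_le_cos_of_nonneg_of_le_pi ha0 hx h1
  · have hcx : Real.cos x = Real.cos (2 * π - x) := by
      simp [Real.cos_sub, Real.cos_two_pi, Real.sin_two_pi]
    rw [hcx]
    exact Real.cos_le_cos_of_nonneg_of_le_pi ha0 (by linarith) (by linarith)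

/-- For `1 < α ≤ 2` and `s ∈ [0,π]`, one has `−1 ≤ Z₁(α,s) ≤ cos(πα/2)`. -/
theorem Z1_bounds (α s : ℝ) (h1 : 1 < α) (h2 : α ≤ 2) (hs : s ∈ Set.Icc (0 : ℝ) π) :
    -1 ≤ Z1 α α s ∧ Z1 α α s ≤ Real.cos (π * α / 2) := by
  obtain ⟨hs0, hsπ⟩ := hs
  have hα0 : (0 : ℝ) < α := by linarith
  refine ⟨Real.neg_one_le_cos _, ?_⟩
  rcases eq_or_lt_of_le hs0 with h0 | hspos
  · -- s = 0 : equality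
    have hθ : thetaAngle α 0 = 0 := by simp [thetaAngle, d2]
    rw [Z1, ← h0, hθ]
    rw [show ((0 : ℝ) - π) / 2 + 0 = -(π / 2) by ring]
    rw [show -(π / 2) * α - 0 = -(π * α / 2) by ring, Real.cos_neg]
  · set c : ℝ := (2 - α) / (2 * α) with hc
    have hc0 : 0 ≤ c := div_nonneg (by linarith) (by linarith)
    have hc12 : c < 1 / 2 := by
      rw [hc, div_lt_iff₀ (by linarith)]; linarith
    have hb2 : b2 α = -c := by
      rw [b2, hc, ← neg_div]; ring_nf
    have hb0 : b0 α = 1 - c := by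
      rw [b0, hc]; field_simp; ring
    have hd1 : d1 α s = 1 - c + c * Real.cos s := by rw [d1, hb0, hb2]; ring
    have hd2 : d2 α s = c * Real.sin s := by rw [d2, hb2]; ring
    have hd1pos : 0 < d1 α s := by
      rw [hd1]; nlinarith [Real.neg_one_le_cos s, Real.cos_le_one s]
    have hsin0 : 0 ≤ Real.sin s := Real.sin_nonneg_of_nonneg_of_le_pi hs0 hsπ
    have hcs0 : 0 ≤ c * s := mul_nonneg hc0 hs0
    have hcslt : c * s < π / 2 := by
      calc c * s ≤ c * π := mul_le_mul_of_nonneg_left hsπ hc0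
      _ < 1 / 2 * π := mul_lt_mul_of_pos_right hc12 Real.pi_pos
      _ = π / 2 := by ring
    have hcoscs : 0 < Real.cos (c * s) :=
      Real.cos_pos_of_mem_Ioo ⟨by linarith [Real.pi_pos], hcslt⟩
    -- key concavity inequality
    have hkey : c * s * Real.sin ((1 - c) * s) ≤ (1 - c) * s * Real.sin (c * s) := by
      apply mul_sin_le_mul_sin hcs0
      · nlinarith
      · nlinarith [Real.pi_pos]
    have hkey2 : c * Real.sin ((1 - c) * s) ≤ (1 - c) * Real.sin (c * s) := by
      have h := hkey
      rw [show c * s * Real.sin ((1 - c) * s) = s * (c * Real.sin ((1 - c) * s)) by ring,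
        show (1 - c) * s * Real.sin (c * s) = s * ((1 - c) * Real.sin (c * s)) by ring] at h
      exact le_of_mul_le_mul_left h hspos
    have hexp : Real.sin ((1 - c) * s)
        = Real.sin s * Real.cos (c * s) - Real.cos s * Real.sin (c * s) := by
      rw [show (1 - c) * s = s - c * s by ring, Real.sin_sub]
    rw [hexp] at hkey2
    have hsincs : 0 ≤ Real.sin (c * s) :=
      Real.sin_nonneg_of_nonneg_of_le_pi hcs0 (by linarith [Real.pi_pos])
    have htan : d2 α s / d1 α s ≤ Real.tan (c * s) := by
      rw [div_le_iff₀ hd1pos, Real.tan_eq_sin_div_cos, div_mul_eq_mul_div,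
        le_div_iff₀ hcoscs, hd1, hd2]
      nlinarith [hkey2]
    have hθle : thetaAngle α s ≤ c * s := by
      rw [thetaAngle, ← Real.arctan_tan (x := c * s) (by linarith [Real.pi_pos]) hcslt]
      exact Real.arctan_strictMono.monotone htan
    have hθ0 : 0 ≤ thetaAngle α s := by
      rw [thetaAngle]
      rw [show (0 : ℝ) = Real.arctan 0 by simp]
      apply Real.arctan_strictMono.monotone
      exact div_nonneg (by rw [hd2]; exact mul_nonneg hc0 hsin0) hd1pos.le
    set θ := thetaAngle α s with hθdef
    set x : ℝ := s + (π - s) * α / 2 - θ * α with hx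
    have harg : ((s - π) / 2 + θ) * α - s = -x := by rw [hx]; ring
    rw [Z1, harg, Real.cos_neg]
    have hca : c * α = (2 - α) / 2 := by
      rw [hc]; field_simp
    have hθα : θ * α ≤ s * ((2 - α) / 2) := by
      calc θ * α ≤ c * s * α := mul_le_mul_of_nonneg_right hθle hα0.le
      _ = s * ((2 - α) / 2) := by rw [mul_assoc, mul_comm s α, ← mul_assoc, hca]; ring
    apply cos_le_cos_band (by positivity)
    · nlinarith [Real.pi_pos]
    · rw [hx]; linarith [hθα]
    · rw [hx]
      have p1 : 0 ≤ θ * α := mul_nonneg hθ0 hα0.le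
      have p2 : 0 ≤ (2 - α) * (π - s / 2) :=
        mul_nonneg (by linarith) (by linarith)
      linarith [p1, p2]
end

section
/- For 1 < α ≤ 2 and s ∈ [0,π], set η = (3α−2)(α−2)(α−1)/(24α) and Z(α,s) = Z₁(α,s) + 4η (d₁² + d₂²) sin²(s/2) Z₁(α+2,s). Then −1 + 16η(α−1)²/α² ≤ Z(α,s) ≤ cos(πα/2) − 4η; in particular Z(α,s) ≤ 0. -/
set_option maxHeartbeats 1000000

open Real

/-- `Z(α,s) = Z₁(α,s) + 4η(d₁² + d₂²) sin²(s/2) Z₁(α+2,s)`. -/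
noncomputable def Zfn (α s : ℝ) : ℝ :=
  Z1 α α s + 4 * etaC α * (d1 α s ^ 2 + d2 α s ^ 2) * Real.sin (s / 2) ^ 2 * Z1 α (α + 2) s

/-- Concavity of `sin` on `[0,π]`: for `0 ≤ a ≤ b ≤ π`, `a·sin b ≤ b·sin a`. -/
lemma aux_sin_concave {a b : ℝ} (ha : 0 ≤ a) (hab : a ≤ b) (hb : b ≤ π) :
    a * Real.sin b ≤ b * Real.sin a := by
  rcases eq_or_lt_of_le hab with rfl | hlt
  · exact le_of_eq (by ring)
  · have hb0 : 0 < b := lt_of_le_of_lt ha hlt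
    have hmem0 : (0 : ℝ) ∈ Set.Icc (0:ℝ) π := ⟨le_refl _, Real.pi_pos.le⟩
    have hmemb : b ∈ Set.Icc (0:ℝ) π := ⟨hb0.le, hb⟩
    have hw2 : 0 ≤ a / b := div_nonneg ha hb0.le
    have hw1 : 0 ≤ 1 - a / b := by
      have : a / b ≤ 1 := (div_le_one hb0).2 hab
      linarith
    have hsum : (1 - a / b) + a / b = 1 := by ring
    have key := (strictConcaveOn_sin_Icc.concaveOn).2 hmem0 hmemb hw1 hw2 hsum
    simp only [smul_eq_mul, Real.sin_zero, mul_zero, zero_add, smul_zero] at key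
    rw [div_mul_cancel₀ a hb0.ne'] at key
    have h2 := mul_le_mul_of_nonneg_left key hb0.le
    have hba : b * (a / b * Real.sin b) = a * Real.sin b := by
      field_simp
    rw [hba] at h2
    linarith only [h2]

/-- `1 - cos w ≥ (7/20) w²` on `[0, π/2]`. -/
lemma aux_one_sub_cos {w : ℝ} (h0 : 0 ≤ w) (h2 : w ≤ π / 2) :
    7 / 20 * w ^ 2 ≤ 1 - Real.cos w := by
  rcases eq_or_lt_of_le h0 with h | h
  · rw [← h]; simp
  · have hx0 : 0 < w / 2 := by linarith only [h]
    have hx78 : w / 2 ≤ 0.7854 := by nlinarith only [Real.pi_lt_d6, h2]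
    have hx1 : w / 2 ≤ 1 := by linarith only [hx78]
    have hsin : w / 2 - (w / 2) ^ 3 / 4 < Real.sin (w / 2) := by
      have := Real.sin_gt_sub_cube hx0; linarith only [this, pow_pos hx0 3]
    have hcc : Real.cos w = 1 - 2 * Real.sin (w / 2) ^ 2 := by
      rw [Real.sin_sq_eq_half_sub, show 2 * (w / 2) = w by ring]; ring
    have hpos : 0 < w / 2 - (w / 2) ^ 3 / 4 := by
      have hcub : (w / 2) * (w / 2) ^ 2 ≤ (w / 2) * 1 :=
        mul_le_mul_of_nonneg_left (by nlinarith only [hx0, hx1]) hx0.le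
      nlinarith only [hcub, hx0]
    have hs2 : (w / 2 - (w / 2) ^ 3 / 4) ^ 2 ≤ Real.sin (w / 2) ^ 2 := by
      nlinarith only [hsin, hpos]
    have hu : (w / 2) ^ 2 ≤ 0.6169 := by nlinarith only [hx78, hx0]
    have hfac : 0 ≤ 0.6 - (w / 2) ^ 2 + (w / 2) ^ 4 / 8 := by
      nlinarith only [hu, sq_nonneg ((w / 2) ^ 2 - 3 / 5)]
    rw [hcc]
    nlinarith only [hs2, mul_nonneg (sq_nonneg (w / 2)) hfac]

/-- For `1 < α ≤ 2` and `s ∈ [0,π]`: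
`−1 + 16η(α−1)²/α² ≤ Z(α,s) ≤ cos(πα/2) − 4η`, and in particular `Z(α,s) ≤ 0`. -/
theorem Zfn_bounds (α s : ℝ) (h1 : 1 < α) (h2 : α ≤ 2) (hs : s ∈ Set.Icc (0 : ℝ) π) :
    (-1 + 16 * etaC α * (α - 1) ^ 2 / α ^ 2 ≤ Zfn α s ∧
      Zfn α s ≤ Real.cos (π * α / 2) - 4 * etaC α) ∧
    Zfn α s ≤ 0 := by
  obtain ⟨hs0, hsπ⟩ := hs
  have hα0 : (0 : ℝ) < α := by linarith only [h1]
  have hπ : (0 : ℝ) < π := Real.pi_pos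
  obtain ⟨m, hmdef⟩ : ∃ x : ℝ, x = (2 - α) / (2 * α) := ⟨_, rfl⟩
  have hm0 : 0 ≤ m := by
    rw [hmdef]; exact div_nonneg (by linarith only [h2]) (by linarith only [hα0])
  have hmm : m * (2 * α) = 2 - α := by
    rw [hmdef]; field_simp
  have hm1 : 2 * m < 1 := by nlinarith only [hmm, hα0, h1]
  have hb0m : b0 α = 1 - m := by
    rw [hmdef]; unfold b0; field_simp; ring_nf
  have hb2m : b2 α = -m := by
    rw [hmdef]; unfold b2; field_simp; ring
  have hd1 : d1 α s = (1 - m) + m * Real.cos s := by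
    unfold d1; rw [hb0m, hb2m]; ring
  have hd2 : d2 α s = m * Real.sin s := by
    unfold d2; rw [hb2m]; ring
  have hsins : 0 ≤ Real.sin s := Real.sin_nonneg_of_nonneg_of_le_pi hs0 hsπ
  have hd1pos : 0 < d1 α s := by
    rw [hd1]; nlinarith only [Real.neg_one_le_cos s, hm0, hm1]
  obtain ⟨θ, hθdef⟩ : ∃ x : ℝ, x = thetaAngle α s := ⟨_, rfl⟩
  have hθ0 : 0 ≤ θ := by
    have hd20 : 0 ≤ d2 α s := by rw [hd2]; exact mul_nonneg hm0 hsins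
    have h := Real.arctan_strictMono.monotone (div_nonneg hd20 hd1pos.le)
    rw [Real.arctan_zero] at h
    rw [hθdef]; exact h
  -- θ ≤ m*s
  have hθms : θ ≤ m * s := by
    rcases eq_or_lt_of_le hs0 with hs0' | hspos
    · have hd20 : d2 α s = 0 := by
        rw [hd2, ← hs0', Real.sin_zero, mul_zero]
      have hθeq : θ = 0 := by
        rw [hθdef]; unfold thetaAngle; rw [hd20, zero_div, Real.arctan_zero]
      rw [hθeq, ← hs0', mul_zero]
    · have ht0 : 0 ≤ m * s := mul_nonneg hm0 hs0
      have htlt : m * s < π / 2 := by nlinarith only [hsπ, hm1, hπ, hspos, hm0]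
      have hcost : 0 < Real.cos (m * s) :=
        Real.cos_pos_of_mem_Ioo ⟨by linarith only [ht0, hπ], htlt⟩
      have hk := aux_sin_concave (a := m * s) (b := (1 - m) * s) ht0
        (by nlinarith only [hm1, hspos]) (by nlinarith only [hm0, hspos, hsπ])
      have key : m * Real.sin ((1 - m) * s) ≤ (1 - m) * Real.sin (m * s) := by
        nlinarith only [hk, hspos]
      have hsplit : Real.sin ((1 - m) * s) =
          Real.sin s * Real.cos (m * s) - Real.cos s * Real.sin (m * s) := by
        rw [show (1 - m) * s = s - m * s by ring, Real.sin_sub]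
      rw [hsplit] at key
      have htan : d2 α s / d1 α s ≤ Real.tan (m * s) := by
        rw [Real.tan_eq_sin_div_cos, div_le_div_iff₀ hd1pos hcost, hd1, hd2]
        nlinarith only [key]
      have harc := Real.arctan_strictMono.monotone htan
      rw [Real.arctan_tan (by linarith only [ht0, hπ]) htlt] at harc
      rw [hθdef]; exact harc
  -- main quantities
  obtain ⟨E, hEdef⟩ : ∃ x : ℝ, x = (3 * α - 2) * (2 - α) * (α - 1) / (6 * α) := ⟨_, rfl⟩
  have hE4 : 4 * etaC α = -E := by
    have hαne : α ≠ 0 := ne_of_gt hα0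
    rw [hEdef]; unfold etaC; field_simp; ring
  have hE0 : 0 ≤ E := by
    rw [hEdef]
    exact div_nonneg
      (mul_nonneg (mul_nonneg (by linarith only [h1]) (by linarith only [h2]))
        (by linarith only [h1]))
      (by linarith only [hα0])
  have hE12 : E ≤ 1 / 12 := by
    rw [hEdef, div_le_div_iff₀ (by linarith only [hα0]) (by norm_num)]
    nlinarith only [sq_nonneg (α - 3/2),
      mul_nonneg (by linarith only [h1] : (0:ℝ) ≤ α - 1)
        (by linarith only [h2] : (0:ℝ) ≤ 2 - α),
      sq_nonneg (α - 1), sq_nonneg (2 - α), h1, h2]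
  obtain ⟨X, hXdef⟩ : ∃ x : ℝ, x = (d1 α s ^ 2 + d2 α s ^ 2) * Real.sin (s / 2) ^ 2 :=
    ⟨_, rfl⟩
  obtain ⟨w, hwdef⟩ : ∃ x : ℝ, x = α * θ + (π - s) * (2 - α) / 2 := ⟨_, rfl⟩
  have hg : Z1 α α s = -Real.cos w := by
    simp only [Z1]
    rw [← hθdef, show ((s - π) / 2 + θ) * α - s = -(π - w) by rw [hwdef]; ring,
      Real.cos_neg, Real.cos_pi_sub]
  have hh : Z1 α (α + 2) s = Real.cos (w + s + 2 * θ - 2 * π) := by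
    simp only [Z1]
    rw [← hθdef]
    congr 1
    rw [hwdef]; ring
  have hw0 : 0 ≤ w := by
    rw [hwdef]
    nlinarith only [mul_nonneg hα0.le hθ0,
      mul_nonneg (by linarith only [hsπ] : (0:ℝ) ≤ π - s)
        (by linarith only [h2] : (0:ℝ) ≤ 2 - α)]
  have ham : α * m = (2 - α) / 2 := by
    rw [hmdef]; field_simp
  have hwle : w ≤ π * (2 - α) / 2 := by
    have h2' := mul_le_mul_of_nonneg_left hθms hα0.le
    rw [show α * (m * s) = α * m * s by ring, ham] at h2'
    rw [hwdef]; nlinarith only [h2']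
  have hwpi2 : w ≤ π / 2 := by
    nlinarith only [hwle, mul_nonneg hπ.le (by linarith only [h1] : (0:ℝ) ≤ α - 1)]
  have hwpi : w ≤ π := by linarith only [hwpi2, hπ]
  have hr2 : d1 α s ^ 2 + d2 α s ^ 2 ≤ 1 := by
    rw [hd1, hd2]
    nlinarith only [Real.sin_sq_add_cos_sq s, Real.cos_le_one s, sq_nonneg m, hm0, hm1,
      mul_nonneg (mul_nonneg hm0 (by linarith only [hm1, hm0] : (0:ℝ) ≤ 1 - m))
        (by linarith only [Real.cos_le_one s] : (0:ℝ) ≤ 1 - Real.cos s)]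
  have hX0 : 0 ≤ X := by rw [hXdef]; positivity
  have hX1 : X ≤ 1 := by
    rw [hXdef]
    nlinarith only [hr2, Real.sin_sq_le_one (s / 2), sq_nonneg (Real.sin (s / 2)),
      sq_nonneg (d1 α s), sq_nonneg (d2 α s)]
  have hZ : Zfn α s = -Real.cos w + (-E) * X * Real.cos (w + s + 2 * θ - 2 * π) := by
    simp only [Zfn]
    rw [hg, hh, hE4, hXdef]; ring
  have hC1 : Real.cos (w + s + 2 * θ - 2 * π) ≤ 1 := Real.cos_le_one _
  have hCm1 : -1 ≤ Real.cos (w + s + 2 * θ - 2 * π) := Real.neg_one_le_cos _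
  -- Upper bound
  have hub : Zfn α s ≤ Real.cos (π * α / 2) - 4 * etaC α := by
    have hc1 : Real.cos (π * α / 2) = -Real.cos (π * (2 - α) / 2) := by
      rw [show π * (2 - α) / 2 = π - π * α / 2 by ring, Real.cos_pi_sub]; ring
    have hc2 : Real.cos (π * (2 - α) / 2) ≤ Real.cos w := by
      apply Real.cos_le_cos_of_nonneg_of_le_pi hw0 _ hwle
      nlinarith only [hπ, hα0, h1]
    have hc3 : (-E) * X * Real.cos (w + s + 2 * θ - 2 * π) ≤ E := by
      have h1' : X * (-Real.cos (w + s + 2 * θ - 2 * π)) ≤ X * 1 :=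
        mul_le_mul_of_nonneg_left (by linarith only [hCm1]) hX0
      have h2' : E * (X * (-Real.cos (w + s + 2 * θ - 2 * π))) ≤ E * 1 :=
        mul_le_mul_of_nonneg_left (by linarith only [h1', hX1]) hE0
      nlinarith only [h2']
    rw [hZ, hE4, hc1]
    linarith only [hc2, hc3]
  -- key lower-bound inequality
  have hterm : 0 ≤ 4 * E * (α - 1) ^ 2 / α ^ 2 :=
    div_nonneg (mul_nonneg (by linarith only [hE0]) (sq_nonneg _)) (sq_nonneg α)
  have hKT : E * X * Real.cos (w + s + 2 * θ - 2 * π) ≤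
      (1 - Real.cos w) + 4 * E * (α - 1) ^ 2 / α ^ 2 := by
    rcases le_or_gt (Real.cos (w + s + 2 * θ - 2 * π)) 0 with hC | hC
    · have hn : E * X * Real.cos (w + s + 2 * θ - 2 * π) ≤ 0 :=
        mul_nonpos_of_nonneg_of_nonpos (mul_nonneg hE0 hX0) hC
      nlinarith only [hn, Real.cos_le_one w, hterm]
    · rcases le_or_gt 0 (7 * α ^ 2 - 16 * α + 8) with hq | hq
      · -- X is small
        have hssq : Real.sin (s / 2) ^ 2 = 1 / 2 - Real.cos s / 2 := by
          rw [Real.sin_sq_eq_half_sub, show 2 * (s / 2) = s by ring]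
        have hqm : 0 ≤ 1 - 8 * m + 8 * m ^ 2 := by
          have hαne : α ≠ 0 := ne_of_gt hα0
          have hid : 1 - 8 * m + 8 * m ^ 2 = (7 * α ^ 2 - 16 * α + 8) / α ^ 2 := by
            rw [hmdef]; field_simp; ring
          rw [hid]; exact div_nonneg hq (sq_nonneg α)
        have h2m : (1 - 2 * m) ^ 2 = 4 * (α - 1) ^ 2 / α ^ 2 := by
          have hαne : α ≠ 0 := ne_of_gt hα0
          rw [hmdef]; field_simp; ring
        have hXsmall : X ≤ 4 * (α - 1) ^ 2 / α ^ 2 := by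
          rw [hXdef, hd1, hd2, hssq, ← h2m]
          have hσ : Real.sin s ^ 2 = 1 - Real.cos s ^ 2 := by
            nlinarith only [Real.sin_sq_add_cos_sq s]
          nlinarith only [hσ, Real.neg_one_le_cos s, Real.cos_le_one s, hm0, hm1,
            mul_nonneg (by nlinarith only [Real.neg_one_le_cos s] :
              (0:ℝ) ≤ 1 + Real.cos s) hqm,
            mul_nonneg (mul_nonneg hm0 (by linarith only [hm1] : (0:ℝ) ≤ 1 - m))
              (sq_nonneg (1 + Real.cos s))]
        have e1 : E * X * Real.cos (w + s + 2 * θ - 2 * π) ≤ E * X := by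
          have h1' := mul_le_mul_of_nonneg_left hC1 (mul_nonneg hE0 hX0)
          nlinarith only [h1']
        have e2 : E * X ≤ E * (4 * (α - 1) ^ 2 / α ^ 2) :=
          mul_le_mul_of_nonneg_left hXsmall hE0
        nlinarith only [Real.cos_le_one w, e1, e2,
          (by ring : E * (4 * (α - 1) ^ 2 / α ^ 2) = 4 * E * (α - 1) ^ 2 / α ^ 2)]
      · -- α < 1.56 region
        have hα156 : α ≤ 39 / 25 := by
          by_contra hcon
          push_neg at hcon
          nlinarith only [hq, mul_pos (by linarith only [hcon] : (0:ℝ) < α - 39/25)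
            (by nlinarith only [hcon] : (0:ℝ) < 7 * α - 127/25)]
        rcases le_or_gt (w + s + 2 * θ - 2 * π) (-(3 * π / 2)) with hcase | hcase
        · -- small s region
          have hsw : s + w ≤ π / 2 := by linarith only [hcase, hθ0]
          have hs2' : s ≤ π / 2 := by linarith only [hsw, hw0]
          have h1' : (π - s) * (2 - α) / 2 ≤ w := by
            rw [hwdef]; nlinarith only [mul_nonneg hα0.le hθ0]
          have hwlb : π * (2 - α) / 4 ≤ w := by
            nlinarith only [h1', mul_le_mul_of_nonneg_right
              (by linarith only [hs2'] : π / 2 ≤ π - s)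
              (by linarith only [h2] : (0:ℝ) ≤ 2 - α)]
          have hsub : s ≤ π * α / 4 := by linarith only [hwlb, hsw]
          have hsin2 : Real.sin (s / 2) ≤ s / 2 := Real.sin_le (by linarith only [hs0])
          have hsin2' : 0 ≤ Real.sin (s / 2) :=
            Real.sin_nonneg_of_nonneg_of_le_pi (by linarith only [hs0])
              (by linarith only [hsπ, hπ])
          have hXs : X ≤ (s / 2) ^ 2 := by
            rw [hXdef]
            nlinarith only [hr2, sq_nonneg (Real.sin (s / 2)), hsin2, hsin2',
              sq_nonneg (d1 α s), sq_nonneg (d2 α s),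
              mul_self_le_mul_self hsin2' hsin2]
          have e1 : E * X * Real.cos (w + s + 2 * θ - 2 * π) ≤ E * X := by
            have h1'' := mul_le_mul_of_nonneg_left hC1 (mul_nonneg hE0 hX0)
            nlinarith only [h1'']
          have e2 : E * X ≤ E * ((s / 2) ^ 2) := mul_le_mul_of_nonneg_left hXs hE0
          have e3 : E * ((s / 2) ^ 2) ≤ E * ((π * α / 4) ^ 2 / 4) := by
            apply mul_le_mul_of_nonneg_left _ hE0
            nlinarith only [hsub, hs0]
          have hRHS : 7 / 20 * (π * (2 - α) / 4) ^ 2 ≤ 1 - Real.cos w := by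
            have hoc := aux_one_sub_cos hw0 hwpi2
            have h5 : (π * (2 - α) / 4) ^ 2 ≤ w ^ 2 := by
              nlinarith only [hwlb, mul_nonneg hπ.le
                (by linarith only [h2] : (0:ℝ) ≤ 2 - α)]
            nlinarith only [hoc, h5]
          have hpoly : E * α ^ 2 * 5 ≤ 7 * (2 - α) ^ 2 := by
            rw [hEdef, div_mul_eq_mul_div, div_mul_eq_mul_div,
              div_le_iff₀ (by linarith only [hα0] : (0:ℝ) < 6 * α)]
            nlinarith only [hα156, h1, h2, hα0,
              mul_nonneg (by linarith only [h1] : (0:ℝ) ≤ α - 1)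
                (by linarith only [h2] : (0:ℝ) ≤ 2 - α),
              mul_nonneg (mul_nonneg (by linarith only [h1] : (0:ℝ) ≤ α - 1)
                (by linarith only [h2] : (0:ℝ) ≤ 2 - α))
                (by linarith only [hα156] : (0:ℝ) ≤ 39/25 - α),
              sq_nonneg (α - 1), sq_nonneg (2 - α)]
          have hnum : E * ((π * α / 4) ^ 2 / 4) ≤ 7 / 20 * (π * (2 - α) / 4) ^ 2 := by
            nlinarith only [mul_nonneg (sq_nonneg π)
              (by nlinarith only [hpoly] : (0:ℝ) ≤ 7 * (2 - α) ^ 2 - 5 * (E * α ^ 2))]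
          linarith only [e1, e2, e3, hRHS, hnum, hterm]
        · -- θ large region
          have hhg : -(π / 2) < w + s + 2 * θ - 2 * π := by
            by_contra hcon
            push_neg at hcon
            have h3 : π / 2 ≤ -(w + s + 2 * θ - 2 * π) := by linarith only [hcon]
            have h4 : -(w + s + 2 * θ - 2 * π) ≤ π + π / 2 := by linarith only [hcase]
            have h5 := Real.cos_nonpos_of_pi_div_two_le_of_le h3 h4
            rw [Real.cos_neg] at h5
            linarith only [h5, hC]
          have hθlb : π / 2 < (α + 2) * θ := by
            rw [hwdef] at hhg
            nlinarith only [hhg, mul_nonneg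
              (by linarith only [hsπ] : (0:ℝ) ≤ π - s) hα0.le]
          have hθlb2 : π / 2 < (89 / 25) * θ := by
            nlinarith only [hθlb, mul_le_mul_of_nonneg_right
              (by linarith only [hα156] : α + 2 ≤ (89:ℝ)/25) hθ0]
          have hwθ : θ ≤ w := by
            rw [hwdef]
            nlinarith only [mul_nonneg (by linarith only [h1] : (0:ℝ) ≤ α - 1) hθ0,
              mul_nonneg (by linarith only [hsπ] : (0:ℝ) ≤ π - s)
                (by linarith only [h2] : (0:ℝ) ≤ 2 - α)]
          have hwlb : (441 : ℝ) / 1000 ≤ w := by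
            nlinarith only [Real.pi_gt_d6, hθlb2, hwθ]
          have hcw : Real.cos w ≤ Real.cos ((441 : ℝ) / 1000) :=
            Real.cos_le_cos_of_nonneg_of_le_pi (by norm_num) hwpi hwlb
          have hcb : Real.cos ((441 : ℝ) / 1000) ≤
              1 - (441 / 1000 : ℝ) ^ 2 / 2 + (441 / 1000 : ℝ) ^ 4 * (5 / 96) := by
            have hb := Real.cos_bound (x := (441 : ℝ) / 1000)
              (by rw [abs_of_nonneg (by norm_num : (0:ℝ) ≤ 441/1000)]; norm_num)
            rw [abs_of_nonneg (by norm_num : (0:ℝ) ≤ 441/1000)] at hb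
            have hb2 := abs_le.1 hb
            linarith only [hb2.2]
          have hEXC : E * X * Real.cos (w + s + 2 * θ - 2 * π) ≤ E := by
            have h1' := mul_le_mul_of_nonneg_left hC1 (mul_nonneg hE0 hX0)
            have h2' := mul_le_mul_of_nonneg_left hX1 hE0
            nlinarith only [h1', h2']
          have hnum2 : (1 : ℝ) / 12 ≤ 1 - Real.cos w := by
            have h9 : (1 : ℝ) - (441 / 1000 : ℝ) ^ 2 / 2 +
                (441 / 1000 : ℝ) ^ 4 * (5 / 96) ≤ 11 / 12 := by norm_num
            linarith only [hcw, hcb, h9]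
          linarith only [hEXC, hE12, hterm, hnum2]
  -- Lower bound
  have h16 : 16 * etaC α * (α - 1) ^ 2 / α ^ 2 = -(4 * E * (α - 1) ^ 2 / α ^ 2) := by
    have hαne : α ≠ 0 := ne_of_gt hα0
    rw [hEdef]; unfold etaC; field_simp; ring
  have hlb : -1 + 16 * etaC α * (α - 1) ^ 2 / α ^ 2 ≤ Zfn α s := by
    rw [hZ, h16]
    linarith only [hKT]
  -- nonpositivity
  have hsinge : α - 1 ≤ Real.sin (π * (α - 1) / 2) := by
    have hc := aux_sin_concave (a := π * (α - 1) / 2) (b := π / 2)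
      (by nlinarith only [hπ, h1] : (0:ℝ) ≤ π * (α - 1) / 2)
      (by nlinarith only [hπ, h2] : π * (α - 1) / 2 ≤ π / 2)
      (by linarith only [hπ])
    rw [Real.sin_pi_div_two] at hc
    nlinarith only [hc, hπ]
  have hcos_eq : Real.cos (π * α / 2) = -Real.sin (π * (α - 1) / 2) := by
    rw [show π * α / 2 = π * (α - 1) / 2 + π / 2 by ring, Real.cos_add_pi_div_two]
  have hEα : E ≤ α - 1 := by
    rw [hEdef, div_le_iff₀ (by linarith only [hα0] : (0:ℝ) < 6 * α)]
    nlinarith only [mul_nonneg (by linarith only [h1] : (0:ℝ) ≤ α - 1)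
      (by nlinarith only [sq_nonneg (3 * α - 1)] : (0:ℝ) ≤ 3 * α ^ 2 - 2 * α + 4)]
  have hle0 : Zfn α s ≤ 0 := by
    have hub0 : Real.cos (π * α / 2) - 4 * etaC α ≤ 0 := by
      rw [hE4, hcos_eq]; linarith only [hsinge, hEα]
    linarith only [hub, hub0]
  exact ⟨⟨hlb, hub⟩, hle0⟩
end
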